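/- Let n ≥ 1 and L ∈ ℕ, and let Q assign to each word z ∈ {0,1}^n a finite set Q(z) of binary words with |Q(z)| ≤ L. If for every odd z ∈ {0,1}^n and every even z' ∈ {0,1}^n it holds that z ∈ Q(z') or z' ∈ Q(z), then 2^{2n−2} ≤ 2^n · L. (This is the counting core of the Hartmanis–Hemachandra argument used to derive the final contradiction in the oracle construction.) -/

import Mathlib

/-!
The odd words of length `n` are exactly those ending in `0` (`val (u ++ [b]) = 2 val u + 1 + b`),
so there are `2^(n-1)` odd and `2^(n-1)` even words. Each of the `2^(2n-2)` odd–even pairs is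
witnessed by a membership `z ∈ Q z'` or `z' ∈ Q z`, and double counting bounds the number of such
memberships by `2^n · L`.
-/

/-- The dyadic encoding: `val(w) = Σ_{i<|w|} (1 + w(i)) · 2^{|w|-1-i}`. -/
def dyadicVal (w : List Bool) : ℕ :=
  ∑ i ∈ Finset.range w.length,
    (1 + (if w.getD i false then 1 else 0)) * 2 ^ (w.length - 1 - i)

open Finset

theorem Finset.card_mul_card_le_of_mem_or_mem {α : Type*} {A B : Finset α} {Q : α → Finset α}
    {L : ℕ} (hA : ∀ a ∈ A, #(Q a) ≤ L) (hB : ∀ b ∈ B, #(Q b) ≤ L)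
    (hAB : ∀ a ∈ A, ∀ b ∈ B, a ∈ Q b ∨ b ∈ Q a) :
    #A * #B ≤ (#A + #B) * L := by
  classical
  let r : α → α → Prop := fun a b => a ∈ Q b
  calc #A * #B = ∑ a ∈ A, #B := by rw [sum_const, smul_eq_mul]
    _ ≤ ∑ a ∈ A, (#(B.filter (· ∈ Q a)) + #(B.bipartiteAbove r a)) := by
      refine sum_le_sum fun a ha => (card_le_card fun b hb => ?_).trans (card_union_le _ _)
      rcases hAB a ha b hb with h | h <;> simp [r, bipartiteAbove, hb, h]
    _ = ∑ a ∈ A, #(B.filter (· ∈ Q a)) + ∑ b ∈ B, #(A.bipartiteBelow r b) := by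
      rw [sum_add_distrib, sum_card_bipartiteAbove_eq_sum_card_bipartiteBelow]
    _ ≤ ∑ _a ∈ A, L + ∑ _b ∈ B, L := by
      gcongr with a ha b hb
      · exact (card_le_card fun b hb => (mem_filter.1 hb).2).trans (hA a ha)
      · exact (card_le_card fun a ha => (mem_filter.1 ha).2).trans (hB b hb)
    _ = (#A + #B) * L := by simp only [sum_const, smul_eq_mul, add_mul]

theorem dyadicVal_append_singleton (w : List Bool) (b : Bool) :
    dyadicVal (w ++ [b]) = 2 * dyadicVal w + (1 + if b then 1 else 0) := by
  rw [dyadicVal, dyadicVal, List.length_append, List.length_singleton, sum_range_succ, mul_sum]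
  congr 1
  · refine sum_congr rfl fun i hi => ?_
    have hi : i < w.length := mem_range.1 hi
    rw [List.getD_append _ _ _ _ hi, show w.length + 1 - 1 - i = w.length - 1 - i + 1 by omega,
      pow_succ]
    ring
  · simp

theorem odd_dyadicVal_iff (w : List Bool) : Odd (dyadicVal w) ↔ w.getLast? = some false := by
  induction w using List.reverseRecOn with
  | nil => simp [dyadicVal]
  | append_singleton w b _ =>
    cases b <;> simp [dyadicVal_append_singleton, Nat.odd_add, parity_simps]

def wordsOfLength (n : ℕ) : Finset (List Bool) :=
  (univ : Finset (List.Vector Bool n)).map ⟨List.Vector.toList, List.Vector.toList_injective⟩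

@[simp]
theorem mem_wordsOfLength {n : ℕ} {w : List Bool} : w ∈ wordsOfLength n ↔ w.length = n :=
  ⟨fun hw => by obtain ⟨v, -, rfl⟩ := mem_map.1 hw; exact v.toList_length,
    fun hw => mem_map.2 ⟨⟨w, hw⟩, mem_univ _, rfl⟩⟩

theorem card_wordsOfLength (n : ℕ) : #(wordsOfLength n) = 2 ^ n := by
  rw [wordsOfLength, card_map, card_univ, card_vector, Fintype.card_bool]

theorem filter_odd_dyadicVal_wordsOfLength_succ (m : ℕ) :
    (wordsOfLength (m + 1)).filter (fun w => Odd (dyadicVal w)) =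
      (wordsOfLength m).image (· ++ [false]) := by
  ext w
  simp only [mem_filter, mem_image, mem_wordsOfLength, odd_dyadicVal_iff]
  constructor
  · rintro ⟨hw, hlast⟩
    obtain rfl | ⟨u, b, rfl⟩ := w.eq_nil_or_concat
    · simp at hw
    · simp_all
  · rintro ⟨u, hu, rfl⟩
    simp [hu]

theorem card_filter_odd_dyadicVal_wordsOfLength_succ (m : ℕ) :
    #((wordsOfLength (m + 1)).filter (fun w => Odd (dyadicVal w))) = 2 ^ m := by
  rw [filter_odd_dyadicVal_wordsOfLength_succ,
    card_image_of_injective _ (List.append_left_injective _), card_wordsOfLength]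

/-- The counting core of the Hartmanis–Hemachandra argument: if `Q` assigns to each
word of length `n ≥ 1` a finite set of at most `L` binary words, and for every odd
`z ∈ {0,1}^n` and every even `z' ∈ {0,1}^n` we have `z ∈ Q(z')` or `z' ∈ Q(z)`,
then `2^{2n-2} ≤ 2^n · L`. -/
theorem hartmanis_hemachandra_counting (n L : ℕ) (hn : 1 ≤ n)
    (Q : List Bool → Finset (List Bool))
    (hL : ∀ z : List Bool, z.length = n → (Q z).card ≤ L)
    (hconf : ∀ z z' : List Bool, z.length = n → z'.length = n →
      Odd (dyadicVal z) → Even (dyadicVal z') → (z ∈ Q z' ∨ z' ∈ Q z)) :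
    2 ^ (2 * n - 2) ≤ 2 ^ n * L := by
  obtain ⟨m, rfl⟩ : ∃ m, n = m + 1 := ⟨n - 1, by omega⟩
  set odd := (wordsOfLength (m + 1)).filter (fun w => Odd (dyadicVal w))
  set even := (wordsOfLength (m + 1)).filter (fun w => ¬Odd (dyadicVal w))
  have h_total : #odd + #even = 2 ^ (m + 1) :=
    (card_filter_add_card_filter_not _).trans (card_wordsOfLength _)
  have h_odd : #odd = 2 ^ m := card_filter_odd_dyadicVal_wordsOfLength_succ m
  have h_even : #even = 2 ^ m := by rw [pow_succ] at h_total; omega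
  have length_odd (w) (hw : w ∈ odd) := mem_wordsOfLength.1 (mem_filter.1 hw).1
  have length_even (w) (hw : w ∈ even) := mem_wordsOfLength.1 (mem_filter.1 hw).1
  calc 2 ^ (2 * (m + 1) - 2) = #odd * #even := by
        rw [h_odd, h_even, ← pow_add]; congr 1; omega
    _ ≤ (#odd + #even) * L :=
      card_mul_card_le_of_mem_or_mem (fun a ha => hL a (length_odd a ha))
        (fun b hb => hL b (length_even b hb))
        fun a ha b hb => hconf a b (length_odd a ha) (length_even b hb) (mem_filter.1 ha).2
          (Nat.not_odd_iff_even.1 (mem_filter.1 hb).2)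
    _ = 2 ^ (m + 1) * L := by rw [h_total]
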